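/- arXiv:1910.05174 — 2 statements merged into one kernel-verified Lean document; each statement's English description precedes it below -/
import Mathlib

section
/- Let K be a field trivially ℤ-graded, n a positive integer, and γ_1,…,γ_n and δ_1,…,δ_n arbitrary integers. Then M_n(K)(γ_1,…,γ_n) is graded isomorphic to M_n(K)(δ_1,…,δ_n) if and only if there exist an integer c and a permutation π of {1,…,n} such that δ_i = γ_{π(i)} + c for all i = 1,…,n. -/
/-!
A ring automorphism `φ` of `Mₙ(K)` preserves the centre `K`, so it is semilinear over a field
automorphism of `K` and preserves `K`-dimensions of subspaces. Let `P_a` be the diagonal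
idempotent projecting onto the coordinates `i` with `γ i = a`. Since `P_a x P_b = 0` for `x` of
degree `d ≠ a - b`, and `e_ij` has degree `δ i - δ j` for the second grading, a graded `φ`
satisfies `φ(P_a) k i * φ(P_b) j l ≠ 0 → a - b = δ i - δ j`; together with `∑ φ(P_a) = 1`
this forces `φ(P_a) = P'_{a+c}`, the projection for `δ`, for a single shift `c`. Comparing the
dimensions of `P_a Mₙ(K)` and `P'_{a+c} Mₙ(K)` shows that `γ` and `δ - c` have fibres of the same
size, i.e. differ by a permutation. Conversely, a permutation and a shift are realised by
reindexing.
-/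

/-- Degree-`d` component of `Mₙ(K)(γ₁,…,γₙ)` over a trivially ℤ-graded field `K`:
the `K`-linear span of the matrix units `e i j` with `γ i - γ j = d`, i.e. the
matrices vanishing at every position `(i,j)` with `γ i - γ j ≠ d`. -/
def matComp (K : Type*) [Field K] {n : ℕ} (γ : Fin n → ℤ) (d : ℤ) :
    Set (Matrix (Fin n) (Fin n) K) :=
  {x | ∀ i j, γ i - γ j ≠ d → x i j = 0}

open Matrix Module

namespace Matrix

section RingEquiv

variable {K ι : Type*} [Field K] [Fintype ι] [DecidableEq ι]

theorem ringEquiv_map_scalar_mem_range (φ : Matrix ι ι K ≃+* Matrix ι ι K) (l : K) :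
    φ (scalar ι l) ∈ Set.range (scalar ι) := by
  have hcentral : φ (scalar ι l) ∈ Set.center (Matrix ι ι K) :=
    Semigroup.mem_center_iff.mpr fun y => by
      rw [← φ.apply_symm_apply y, ← map_mul, ← map_mul, scalar_commute l (fun _ => mul_comm _ _)]
  rwa [center_eq_range] at hcentral

theorem exists_bijective_ringEquiv_map_smul [Nonempty ι] (φ : Matrix ι ι K ≃+* Matrix ι ι K) :
    ∃ σ : K → K, Function.Bijective σ ∧ ∀ (l : K) x, φ (l • x) = σ l • φ x := by
  choose σ hσ using ringEquiv_map_scalar_mem_range φ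
  choose τ hτ using ringEquiv_map_scalar_mem_range φ.symm
  refine ⟨σ, Function.bijective_iff_has_inverse.mpr ⟨τ, fun l => ?_, fun m => ?_⟩, fun l x => ?_⟩
  · rw [← scalar_inj (n := ι), hτ, hσ, φ.symm_apply_apply]
  · rw [← scalar_inj (n := ι), hσ, hτ, φ.apply_symm_apply]
  · rw [smul_eq_diagonal_mul, ← scalar_apply, map_mul, ← hσ, scalar_apply, ← smul_eq_diagonal_mul]

theorem finrank_eq_of_ringEquiv_image_eq [Nonempty ι] (φ : Matrix ι ι K ≃+* Matrix ι ι K)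
    {V W : Submodule K (Matrix ι ι K)} (h : φ '' V = W) : finrank K V = finrank K W := by
  obtain ⟨σ, hσ, hsmul⟩ := exists_bijective_ringEquiv_map_smul φ
  have hV : ∀ x ∈ V, φ x ∈ W := fun x hx => by rw [← SetLike.mem_coe, ← h]; exact ⟨x, hx, rfl⟩
  have hW : ∀ y ∈ W, φ.symm y ∈ V := fun y hy => by
    obtain ⟨x, hx, rfl⟩ : y ∈ φ '' V := by rwa [h]
    simpa using hx
  let j : V ≃+ W :=
    { toFun := fun x => ⟨φ x, hV x x.2⟩
      invFun := fun y => ⟨φ.symm y, hW y y.2⟩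
      left_inv := fun x => by simp
      right_inv := fun y => by simp
      map_add' := fun x y => by ext1; simp }
  simp only [finrank, rank_eq_of_equiv_equiv σ j hσ fun r x => Subtype.ext (hsmul r x)]

end RingEquiv

section Fibers

variable {K ι G : Type*} [Field K]

variable (K) in
def fiberRows (γ : ι → G) (a : G) : Submodule K (Matrix ι ι K) :=
  Submodule.pi {i | γ i ≠ a} fun _ => ⊥

theorem mem_fiberRows {γ : ι → G} {a : G} {x : Matrix ι ι K} :
    x ∈ fiberRows K γ a ↔ ∀ i, γ i ≠ a → x i = 0 :=
  Submodule.mem_pi.trans <| forall_congr' fun _ => imp_congr_right fun _ => Submodule.mem_bot K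

variable [DecidableEq ι] [DecidableEq G]

variable (K) in
def fiberProj (γ : ι → G) (a : G) : Matrix ι ι K :=
  diagonal fun i => if γ i = a then 1 else 0

theorem fiberProj_apply (γ : ι → G) (a : G) (i j : ι) :
    fiberProj K γ a i j = if γ i = a then (1 : Matrix ι ι K) i j else 0 := by
  simp only [fiberProj, diagonal_apply, one_apply]
  split_ifs <;> simp_all

theorem sum_fiberProj {γ : ι → G} {s : Finset G} (hs : ∀ i, γ i ∈ s) :
    ∑ a ∈ s, fiberProj K γ a = 1 := by
  ext i j
  simp [sum_apply, fiberProj_apply, hs]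

variable [Fintype ι]

theorem fiberProj_mul_mul_fiberProj_apply (γ : ι → G) (a b : G) (w : Matrix ι ι K) (k l : ι) :
    (fiberProj K γ a * w * fiberProj K γ b) k l = if γ k = a ∧ γ l = b then w k l else 0 := by
  by_cases hk : γ k = a <;> by_cases hl : γ l = b <;> simp [fiberProj, hk, hl]

theorem mem_fiberRows_iff_fiberProj_mul {γ : ι → G} {a : G} {x : Matrix ι ι K} :
    x ∈ fiberRows K γ a ↔ fiberProj K γ a * x = x := by
  simp only [mem_fiberRows, ← Matrix.ext_iff, fiberProj, diagonal_mul, funext_iff]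
  refine forall_congr' fun i => ?_
  by_cases hi : γ i = a <;> simp [hi, eq_comm]

omit [DecidableEq ι] in
theorem finrank_fiberRows (γ : ι → G) (a : G) :
    finrank K (fiberRows K γ a) = Fintype.card {i // γ i = a} * Fintype.card ι := by
  let e : fiberRows K γ a ≃ₗ[K] ({i // γ i = a} → ι → K) :=
    { toFun := fun x i => x.1 i
      invFun := fun y => ⟨fun i => if h : γ i = a then y ⟨i, h⟩ else 0,
        mem_fiberRows.mpr fun i hi => by simp [hi]⟩
      left_inv := fun x => by
        ext i j
        by_cases hi : γ i = a
        · simp [hi]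
        · simp [hi, mem_fiberRows.mp x.2 i hi]
      right_inv := fun y => by ext i; simp [i.2]
      map_add' := fun _ _ => rfl
      map_smul' := fun _ _ => rfl }
  simp [e.finrank_eq, Module.finrank_pi_fintype]

theorem image_fiberRows_of_map_fiberProj {γ δ : ι → G} {a b : G}
    {φ : Matrix ι ι K ≃+* Matrix ι ι K} (h : φ (fiberProj K γ a) = fiberProj K δ b) :
    φ '' fiberRows K γ a = fiberRows K δ b := by
  ext y
  simp only [Set.mem_image, SetLike.mem_coe, mem_fiberRows_iff_fiberProj_mul]
  constructor
  · rintro ⟨x, hx, rfl⟩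
    rw [← h, ← map_mul, hx]
  · refine fun hy => ⟨φ.symm y, φ.injective ?_, φ.apply_symm_apply y⟩
    rw [map_mul, h, φ.apply_symm_apply, hy]

end Fibers

end Matrix

section Grading

variable {K : Type*} [Field K] {n : ℕ}

theorem single_mem_matComp (δ : Fin n → ℤ) (i j : Fin n) (c : K) :
    single i j c ∈ matComp K δ (δ i - δ j) :=
  fun k l hkl => single_apply_of_ne i j c k l fun h => hkl (by rw [h.1, h.2])

theorem matComp_add_const (γ : Fin n → ℤ) (c d : ℤ) :
    matComp K (fun i => γ i + c) d = matComp K γ d := by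
  simp [matComp]

theorem image_reindex_matComp (e : Equiv.Perm (Fin n)) (γ : Fin n → ℤ) (d : ℤ) :
    reindexAlgEquiv K K e '' matComp K γ d = matComp K (γ ∘ e.symm) d := by
  ext y
  constructor
  · rintro ⟨x, hx, rfl⟩ i j hij
    exact hx _ _ hij
  · refine fun hy => ⟨reindexAlgEquiv K K e.symm y, fun i j hij => hy (e i) (e j) ?_, ?_⟩
    · simpa using hij
    · ext; simp

theorem fiberProj_mul_mul_fiberProj_eq_zero {γ : Fin n → ℤ} {d a b : ℤ}
    {w : Matrix (Fin n) (Fin n) K} (hw : w ∈ matComp K γ d) (hab : a - b ≠ d) :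
    fiberProj K γ a * w * fiberProj K γ b = 0 := by
  ext k l
  rw [fiberProj_mul_mul_fiberProj_apply]
  split_ifs with h
  · exact hw k l (by omega)
  · rfl

variable {γ δ : Fin n → ℤ} {φ : Matrix (Fin n) (Fin n) K ≃+* Matrix (Fin n) (Fin n) K}

theorem sub_eq_of_map_fiberProj_mul_ne_zero (hφ : ∀ d, φ '' matComp K γ d = matComp K δ d)
    {a b : ℤ} {i j k l : Fin n}
    (h : φ (fiberProj K γ a) k i * φ (fiberProj K γ b) j l ≠ 0) : a - b = δ i - δ j := by
  by_contra hab
  obtain ⟨w, hw, hwe⟩ : single i j 1 ∈ φ '' matComp K γ (δ i - δ j) := by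
    rw [hφ]
    exact single_mem_matComp δ i j 1
  have hzero := congrArg φ (fiberProj_mul_mul_fiberProj_eq_zero hw hab)
  rw [map_mul, map_mul, hwe, map_zero] at hzero
  apply h
  simpa [mul_apply, single, ite_and, Finset.sum_ite_eq, Finset.sum_ite_eq'] using
    congrFun (congrFun hzero k) l

theorem exists_map_fiberProj_eq (hn : 0 < n) (hφ : ∀ d, φ '' matComp K γ d = matComp K δ d) :
    ∃ c, ∀ b, φ (fiberProj K γ b) = fiberProj K δ (b + c) := by
  set Q := fun b => φ (fiberProj K γ b)
  have hsum : ∀ s : Finset ℤ, (∀ i, γ i ∈ s) → ∑ a ∈ s, Q a = 1 := fun s hs => by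
    rw [← map_sum, sum_fiberProj hs, map_one]
  let i₀ : Fin n := ⟨0, hn⟩
  obtain ⟨a₀, -, ha₀⟩ : ∃ a ∈ Finset.univ.image γ, Q a i₀ i₀ ≠ 0 := by
    apply Finset.exists_ne_zero_of_sum_ne_zero
    rw [← Matrix.sum_apply, hsum _ (by simp)]
    simp
  refine ⟨δ i₀ - a₀, fun b => ?_⟩
  have hsupp : ∀ a j l, Q a j l ≠ 0 → δ j = a + (δ i₀ - a₀) := fun a j l h => by
    have := sub_eq_of_map_fiberProj_mul_ne_zero hφ (mul_ne_zero ha₀ h)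
    omega
  ext j l
  rw [fiberProj_apply]
  split_ifs with hj
  · rw [← hsum (insert b (Finset.univ.image γ)) (by simp), Matrix.sum_apply,
      Finset.sum_eq_single_of_mem b (Finset.mem_insert_self _ _)]
    intro a _ hab
    by_contra h
    exact hab (by have := hsupp a j l h; omega)
  · by_contra h
    exact hj (hsupp b j l h)

theorem exists_perm_of_image_matComp_eq (hn : 0 < n)
    (hφ : ∀ d, φ '' matComp K γ d = matComp K δ d) :
    ∃ (c : ℤ) (π : Equiv.Perm (Fin n)), ∀ i, δ i = γ (π i) + c := by
  obtain ⟨c, hc⟩ := exists_map_fiberProj_eq hn hφ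
  have : Nonempty (Fin n) := ⟨⟨0, hn⟩⟩
  have hcard : ∀ a, Fintype.card {i // δ i - c = a} = Fintype.card {i // γ i = a} := fun a => by
    have := finrank_eq_of_ringEquiv_image_eq φ (image_fiberRows_of_map_fiberProj (hc a))
    rw [finrank_fiberRows, finrank_fiberRows] at this
    rw [Nat.eq_of_mul_eq_mul_right Fintype.card_pos this]
    exact Fintype.card_congr (Equiv.subtypeEquivRight fun i => sub_eq_iff_eq_add)
  refine ⟨c, Equiv.ofFiberEquiv fun a => Fintype.equivOfCardEq (hcard a), fun i => ?_⟩
  have := Equiv.ofFiberEquiv_map (fun a => Fintype.equivOfCardEq (hcard a)) i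
  omega

end Grading

/-- `Mₙ(K)(γ₁,…,γₙ)` is graded isomorphic to `Mₙ(K)(δ₁,…,δₙ)` iff the shifts agree
up to a permutation and a common translation. -/
theorem stmt4 (K : Type*) [Field K] (n : ℕ) (hn : 0 < n) (γ δ : Fin n → ℤ) :
    (∃ φ : Matrix (Fin n) (Fin n) K ≃+* Matrix (Fin n) (Fin n) K,
        ∀ d : ℤ, φ '' matComp K γ d = matComp K δ d) ↔
      ∃ (c : ℤ) (π : Equiv.Perm (Fin n)), ∀ i, δ i = γ (π i) + c := by
  constructor
  · rintro ⟨φ, hφ⟩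
    exact exists_perm_of_image_matComp_eq hn hφ
  · rintro ⟨c, π, h⟩
    refine ⟨(reindexAlgEquiv K K π.symm).toRingEquiv, fun d => ?_⟩
    rw [show δ = fun i => (γ ∘ π.symm.symm) i + c from funext h, matComp_add_const]
    exact image_reindex_matComp π.symm γ d
end

section
/- Let E be a finite comet quiver whose cycle c has length m, and let v be a vertex of c. Then the set of paths of E that end at v and do not contain the cycle c is finite, and for each i ∈ {0,1,…,m−1} there exists at least one path ending at v, not containing c, whose length is congruent to i modulo m (namely, the terminal subpath of c of length i ending at v). -/
/-- A quiver (directed graph): vertices, edges, source and range maps. -/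
structure Quiv where
  V : Type
  E : Type
  src : E → V
  rng : E → V

namespace Quiv

/-- `es` is a path from `u` to `v` (the empty list is the trivial path at `v`,
in which case `u = v`; a nonempty list is a path `e₁…eₙ` with
`rng eₜ = src eₜ₊₁`, starting at `src e₁ = u` and ending at `rng eₙ = v`). -/
def IsPathFromTo (G : Quiv) (u : G.V) (es : List G.E) (v : G.V) : Prop :=
  es.Chain' (fun e f => G.rng e = G.src f) ∧
  (es = [] → u = v) ∧
  (∀ e, es.head? = some e → G.src e = u) ∧
  (∀ e, es.getLast? = some e → G.rng e = v)

/-- `es` is a path ending at `v`. -/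
def IsPathTo (G : Quiv) (es : List G.E) (v : G.V) : Prop :=
  ∃ u, G.IsPathFromTo u es v

/-- A sink is a vertex emitting no edges. -/
def IsSink (G : Quiv) (v : G.V) : Prop := ∀ e : G.E, G.src e ≠ v

/-- A cycle: a path of positive length ending at its own source, in which
distinct edges have distinct sources. -/
def IsCycle (G : Quiv) (es : List G.E) : Prop :=
  es ≠ [] ∧ (∃ u, G.IsPathFromTo u es u) ∧
  ∀ e ∈ es, ∀ f ∈ es, e ≠ f → G.src e ≠ G.src f

end Quiv

/-- A path `es` contains the cycle `c` if some rotation of `c` occurs as a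
contiguous subpath (infix) of `es`. -/
def Quiv.Contains (G : Quiv) (c es : List G.E) : Prop :=
  ∃ k : ℕ, (c.rotate k) <:+: es

/-! Every closed path of a comet runs along its cycle `c`: a closed path with a repeated source
splits into two shorter closed paths, and one without is a cycle. Hence an edge off `c` never
has its source revisited later along a path, so a path has at most `|V|` edges off `c`. On the
other hand, `|c|` consecutive edges on `c` form a rotation of `c`, because `src` is injective
on `c`. So a path not containing `c` has an edge off `c` in each of its blocks of `|c|`
consecutive edges, and its length is below `(|V| + 1) |c|`. The paths of length `i < |c|` ending
at `v` are the terminal subpaths of the rotation of `c` based at `v`. -/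

theorem List.exists_eq_append_cons_append_cons_of_not_nodup_map {α β : Type*} {f : α → β}
    {l : List α} (h : ¬ (l.map f).Nodup) :
    ∃ A a B b C, l = A ++ a :: (B ++ b :: C) ∧ f a = f b := by
  induction l with
  | nil => simp at h
  | cons x l ih =>
    rw [List.map_cons, List.nodup_cons, not_and_or, not_not] at h
    rcases h with h | h
    · obtain ⟨y, hy, hxy⟩ := List.mem_map.1 h
      obtain ⟨B, C, rfl⟩ := List.append_of_mem hy
      exact ⟨[], x, B, y, C, rfl, hxy.symm⟩
    · obtain ⟨A, a, B, b, C, rfl, hab⟩ := ih h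
      exact ⟨x :: A, a, B, b, C, rfl, hab⟩

theorem List.le_countP_of_forall_isInfix {α : Type*} (p : α → Bool) {k : ℕ} :
    ∀ {n : ℕ} {l : List α}, n * k ≤ l.length →
      (∀ s, s <:+: l → s.length = k → ∃ x ∈ s, p x) → n ≤ l.countP p
  | 0, _, _, _ => Nat.zero_le _
  | n + 1, l, hl, h => by
    have hk : k ≤ l.length := le_trans (Nat.le_mul_of_pos_left k n.succ_pos) hl
    obtain ⟨x, hx, hpx⟩ := h _ (l.take_prefix k).isInfix (List.length_take_of_le hk)
    have hhead : 0 < (l.take k).countP p := List.countP_pos_iff.2 ⟨x, hx, hpx⟩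
    have htail : n ≤ (l.drop k).countP p :=
      List.le_countP_of_forall_isInfix p (by rw [List.length_drop]; rw [Nat.succ_mul] at hl; omega)
        fun s hs => h s (hs.trans (l.drop_suffix k).isInfix)
    rw [← l.take_append_drop k, List.countP_append]
    omega

namespace Quiv

variable {G : Quiv} {cs : List G.E}

set_option linter.deprecated false in
@[simp] lemma isPathFromTo_nil {u v : G.V} : G.IsPathFromTo u [] v ↔ u = v := by
  simp [IsPathFromTo, List.Chain']

set_option linter.deprecated false in
@[simp] lemma isPathFromTo_cons {u v : G.V} {e : G.E} {l : List G.E} :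
    G.IsPathFromTo u (e :: l) v ↔ G.src e = u ∧ G.IsPathFromTo (G.rng e) l v := by
  cases l with
  | nil => simp [IsPathFromTo, List.Chain', eq_comm]
  | cons f l => simp [IsPathFromTo, List.Chain', eq_comm]; tauto

lemma isPathFromTo_append {u v : G.V} {l₁ l₂ : List G.E} :
    G.IsPathFromTo u (l₁ ++ l₂) v ↔
      ∃ w, G.IsPathFromTo u l₁ w ∧ G.IsPathFromTo w l₂ v := by
  induction l₁ generalizing u with
  | nil => simp
  | cons e l ih => simp [ih, and_assoc]

lemma IsCycle.injOn_src (hc : G.IsCycle cs) : Set.InjOn G.src {e | e ∈ cs} :=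
  fun e he f hf hef => by_contra fun hne => hc.2.2 e he f hf hne hef

lemma IsCycle.isPathFromTo_rotate (hc : G.IsCycle cs) {r : ℕ} (hr : r < cs.length) :
    G.IsPathFromTo (G.src cs[r]) (cs.rotate r) (G.src cs[r]) := by
  obtain ⟨u, hu⟩ := hc.2.1
  rw [← cs.take_append_drop r, isPathFromTo_append] at hu
  obtain ⟨w, htake, hdrop⟩ := hu
  have hw : G.src cs[r] = w := by
    rw [List.drop_eq_getElem_cons hr, isPathFromTo_cons] at hdrop
    exact hdrop.1
  rw [List.rotate_eq_drop_append_take hr.le, isPathFromTo_append, hw]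
  exact ⟨u, hdrop, htake⟩

lemma eq_of_isPathFromTo_of_injOn {S : Set G.E} (hS : Set.InjOn G.src S) :
    ∀ {u v v' : G.V} {l l' : List G.E}, G.IsPathFromTo u l v → G.IsPathFromTo u l' v' →
      (∀ e ∈ l, e ∈ S) → (∀ e ∈ l', e ∈ S) → l.length = l'.length → l = l'
  | _, _, _, [], [], _, _, _, _, _ => rfl
  | _, _, _, e :: l, e' :: l', hl, hl', hS₁, hS₂, hlen => by
    rw [isPathFromTo_cons] at hl hl'
    obtain rfl : e = e' := hS (hS₁ e (by simp)) (hS₂ e' (by simp)) (hl.1.trans hl'.1.symm)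
    rw [eq_of_isPathFromTo_of_injOn hS hl.2 hl'.2 (fun f hf => hS₁ f (by simp [hf]))
      (fun f hf => hS₂ f (by simp [hf])) (by simpa using hlen)]

lemma contains_of_isInfix (hc : G.IsCycle cs) {u v : G.V} {l w : List G.E}
    (hl : G.IsPathFromTo u l v) (hw : w <:+: l) (hlen : w.length = cs.length)
    (hwc : ∀ e ∈ w, e ∈ cs) : G.Contains cs l := by
  obtain ⟨s, t, rfl⟩ := hw
  obtain ⟨x, ⟨y, -, hw⟩, -⟩ := by simpa only [isPathFromTo_append] using hl
  obtain ⟨e, w, rfl⟩ := List.exists_cons_of_length_pos (hlen ▸ List.length_pos_of_ne_nil hc.1)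
  obtain ⟨r, hr, rfl⟩ := List.mem_iff_getElem.1 (hwc e List.mem_cons_self)
  have hrot : cs.rotate r = cs[r] :: w :=
    eq_of_isPathFromTo_of_injOn hc.injOn_src (hc.isPathFromTo_rotate hr)
      (isPathFromTo_cons.2 ⟨rfl, (isPathFromTo_cons.1 hw).2⟩ : G.IsPathFromTo _ _ x)
      (fun e he => List.mem_rotate.1 he) hwc (by simpa using hlen.symm)
  exact ⟨r, hrot ▸ (List.infix_append s _ t)⟩

lemma mem_of_isPathFromTo_self (hcyc : ∀ c', G.IsCycle c' → ∀ e ∈ c', e ∈ cs) :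
    ∀ {u : G.V} {l : List G.E}, G.IsPathFromTo u l u → ∀ e ∈ l, e ∈ cs := by
  intro u l hl
  induction hn : l.length using Nat.strong_induction_on generalizing u l with
  | _ n ih =>
  by_cases hnd : (l.map G.src).Nodup
  · intro e he
    exact hcyc l ⟨List.ne_nil_of_mem he, ⟨u, hl⟩, fun e he f hf hef hsrc =>
      hef (List.inj_on_of_nodup_map hnd he hf hsrc)⟩ e he
  · obtain ⟨A, a, B, b, C, rfl, hab⟩ :=
      List.exists_eq_append_cons_append_cons_of_not_nodup_map hnd
    simp only [isPathFromTo_append, isPathFromTo_cons] at hl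
    obtain ⟨w, hA, rfl, w', hB, rfl, hC⟩ := hl
    have hloop : G.IsPathFromTo (G.src a) (a :: B) (G.src a) := by
      rw [isPathFromTo_cons, hab]; exact ⟨rfl, hB⟩
    have hrest : G.IsPathFromTo u (A ++ b :: C) u :=
      isPathFromTo_append.2 ⟨_, hA, isPathFromTo_cons.2 ⟨hab.symm, hC⟩⟩
    intro e he
    have hsplit : e ∈ a :: B ∨ e ∈ A ++ b :: C := by
      simp only [List.mem_append, List.mem_cons] at he ⊢; tauto
    have hlen : (a :: B).length < n ∧ (A ++ b :: C).length < n := by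
      simp only [List.length_append, List.length_cons] at hn ⊢
      omega
    rcases hsplit with he | he
    exacts [ih _ hlen.1 hloop rfl e he, ih _ hlen.2 hrest rfl e he]

lemma pairwise_src_ne_of_notMem (hcyc : ∀ c', G.IsCycle c' → ∀ e ∈ c', e ∈ cs) :
    ∀ {u v : G.V} {l : List G.E}, G.IsPathFromTo u l v →
      l.Pairwise (fun e f => e ∉ cs → G.src e ≠ G.src f)
  | _, _, [], _ => List.Pairwise.nil
  | _, _, e :: l, hl => by
    rw [isPathFromTo_cons] at hl
    refine List.pairwise_cons.2 ⟨fun f hf he hsrc => he ?_, pairwise_src_ne_of_notMem hcyc hl.2⟩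
    obtain ⟨X, Y, rfl⟩ := List.append_of_mem hf
    obtain ⟨w, hX, hfY⟩ := isPathFromTo_append.1 hl.2
    have hw : G.src e = w := hsrc.trans (isPathFromTo_cons.1 hfY).1
    exact mem_of_isPathFromTo_self hcyc (isPathFromTo_cons.2 ⟨hw, hX⟩) e List.mem_cons_self

open scoped Classical in
lemma countP_notMem_le_natCard [Finite G.V] (hcyc : ∀ c', G.IsCycle c' → ∀ e ∈ c', e ∈ cs)
    {u v : G.V} {l : List G.E} (hl : G.IsPathFromTo u l v) :
    l.countP (fun e => e ∉ cs) ≤ Nat.card G.V := by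
  have hnd : ((l.filter (fun e => e ∉ cs)).map G.src).Nodup :=
    List.pairwise_map.2 (List.pairwise_filter.2 ((pairwise_src_ne_of_notMem hcyc hl).imp
      fun h he _ => h (by simpa using he)))
  simpa [List.countP_eq_length_filter] using hnd.length_le_natCard

open scoped Classical in
lemma length_lt_of_not_contains [Finite G.V] (hc : G.IsCycle cs)
    (hcyc : ∀ c', G.IsCycle c' → ∀ e ∈ c', e ∈ cs) {u v : G.V} {l : List G.E}
    (hl : G.IsPathFromTo u l v) (hnc : ¬ G.Contains cs l) :
    l.length < (Nat.card G.V + 1) * cs.length := by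
  by_contra! hlen
  have hwindow : ∀ w, w <:+: l → w.length = cs.length → ∃ e ∈ w, decide (e ∉ cs) := by
    intro w hw hwlen
    by_contra! hall
    exact hnc (contains_of_isInfix hc hl hw hwlen (by simpa using hall))
  have := List.le_countP_of_forall_isInfix _ hlen hwindow
  have := countP_notMem_le_natCard hcyc hl
  omega

lemma IsCycle.exists_isPathTo_length_eq (hc : G.IsCycle cs) {e : G.E} (he : e ∈ cs) {i : ℕ}
    (hi : i < cs.length) :
    ∃ l, G.IsPathTo l (G.src e) ∧ ¬ G.Contains cs l ∧ l.length = i := by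
  obtain ⟨r, hr, rfl⟩ := List.mem_iff_getElem.1 he
  have hrot := hc.isPathFromTo_rotate hr
  rw [← (cs.rotate r).take_append_drop (cs.length - i), isPathFromTo_append] at hrot
  obtain ⟨w, -, hdrop⟩ := hrot
  refine ⟨(cs.rotate r).drop (cs.length - i), ⟨w, hdrop⟩, fun ⟨k, hk⟩ => ?_, ?_⟩
  · have := hk.length_le
    simp only [List.length_rotate, List.length_drop] at this
    omega
  · simp only [List.length_drop, List.length_rotate]
    omega

end Quiv

theorem stmt11_general (G : Quiv) (hV : Finite G.V) (hE : Finite G.E)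
    (c : List G.E) (hc : G.IsCycle c)
    (honly : ∀ c' : List G.E, G.IsCycle c' → ∀ e, e ∈ c' ↔ e ∈ c)
    (m : ℕ) (hm : c.length = m)
    (v : G.V) (hv : ∃ e ∈ c, G.src e = v) :
    {es | G.IsPathTo es v ∧ ¬ G.Contains c es}.Finite ∧
    ∀ i, i < m → ∃ es, G.IsPathTo es v ∧ ¬ G.Contains c es ∧ es.length % m = i := by
  subst hm
  obtain ⟨e, he, rfl⟩ := hv
  have hcyc : ∀ c', G.IsCycle c' → ∀ e ∈ c', e ∈ c := fun c' hc' e => (honly c' hc' e).1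
  refine ⟨(List.finite_length_le G.E ((Nat.card G.V + 1) * c.length)).subset ?_, fun i hi => ?_⟩
  · rintro l ⟨⟨u, hl⟩, hnc⟩
    exact (Quiv.length_lt_of_not_contains hc hcyc hl hnc).le
  · obtain ⟨l, hl, hnc, rfl⟩ := hc.exists_isPathTo_length_eq he hi
    exact ⟨l, hl, hnc, Nat.mod_eq_of_lt hi⟩

/-- In a finite comet quiver whose cycle `c` has length `m`, for a vertex `v` of
`c`: the set of paths ending at `v` not containing `c` is finite, and for each
`i < m` there is such a path whose length is congruent to `i` modulo `m`. -/
theorem stmt11 (G : Quiv) (hV : Finite G.V) (hE : Finite G.E)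
    (c : List G.E) (hc : G.IsCycle c)
    (honly : ∀ c' : List G.E, G.IsCycle c' → ∀ e, e ∈ c' ↔ e ∈ c)
    (hconn : ∀ u : G.V, ∃ (es : List G.E) (w : G.V),
      G.IsPathFromTo u es w ∧ ∃ e ∈ c, G.src e = w)
    (m : ℕ) (hm : c.length = m)
    (v : G.V) (hv : ∃ e ∈ c, G.src e = v) :
    {es | G.IsPathTo es v ∧ ¬ G.Contains c es}.Finite ∧
    ∀ i, i < m → ∃ es, G.IsPathTo es v ∧ ¬ G.Contains c es ∧ es.length % m = i :=
  stmt11_general G hV hE c hc honly m hm v hv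
end
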